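/- arXiv:1203.3275 — 4 statements merged into one kernel-verified Lean document; each statement's English description precedes it below -/
import Mathlib

section
/- For all complex s with Re(s) > 1, the Dirichlet series ∑_{n=1}^∞ Λ(n)²/n^s converges and equals ∑_n (log n)·Λ(n)/n^s − ∑_p (log p)²/(p^s − 1)², i.e. (ζ'/ζ)'(s) − B(s) where B(s) = ∑_p (log p)²/(p^s − 1)². -/
/-!
The difference `(log n - Λ n) Λ n` vanishes off prime powers and equals `k (log p)²` at
`n = p ^ (k + 1)`. Both series converge absolutely for `Re s > 1` (as `Λ n ≤ log n`), so the
series of differences may be summed prime by prime, and for each `p` the sum over `k` is the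
derivative-of-geometric series `∑ k z^(-(k+1)) = 1 / (z - 1)²` at `z = p ^ s`.
-/

open ArithmeticFunction
open LSeries.notation

open Complex in
lemma natCast_pow_cpow (n k : ℕ) (s : ℂ) : ((n ^ k : ℕ) : ℂ) ^ s = ((n : ℂ) ^ s) ^ k := by
  rw [Nat.cast_pow, ← natCast_cpow_natCast_mul, cpow_nat_mul]

lemma one_lt_norm_natCast_cpow {n : ℕ} (hn : 1 < n) {s : ℂ} (hs : 0 < s.re) :
    1 < ‖(n : ℂ) ^ s‖ := by
  rw [Complex.norm_natCast_cpow_of_pos (by omega)]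
  exact Real.one_lt_rpow (by exact_mod_cast hn) hs

lemma hasSum_natCast_div_pow_succ {𝕜 : Type*} [NormedField 𝕜] {z : 𝕜} (hz : 1 < ‖z‖) :
    HasSum (fun k : ℕ => (k : 𝕜) / z ^ (k + 1)) (1 / (z - 1) ^ 2) := by
  have hz₀ : z ≠ 0 := norm_pos_iff.mp (one_pos.trans hz)
  have hz₁ : z - 1 ≠ 0 := sub_ne_zero.mpr (by rintro rfl; simp at hz)
  have hr : ‖z⁻¹‖ < 1 := by rw [norm_inv]; exact inv_lt_one_of_one_lt₀ hz
  convert! (hasSum_coe_mul_geometric_of_norm_lt_one hr).mul_left z⁻¹ using 1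
  · ext k
    rw [pow_succ, inv_pow, div_eq_mul_inv, mul_inv_rev]
    ring
  · field_simp

lemma vonMangoldt_sq_le_log_mul_vonMangoldt (n : ℕ) : Λ n ^ 2 ≤ Real.log n * Λ n := by
  rw [sq]
  exact mul_le_mul_of_nonneg_right vonMangoldt_le_log vonMangoldt_nonneg

lemma log_mul_vonMangoldt_sub_sq_prime_pow (p : Nat.Primes) (k : ℕ) :
    Real.log ((p ^ (k + 1) : ℕ) : ℝ) * Λ (p ^ (k + 1)) - Λ (p ^ (k + 1)) ^ 2 =
      k * Real.log p ^ 2 := by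
  rw [vonMangoldt_apply_pow k.succ_ne_zero, vonMangoldt_apply_prime p.prop, Nat.cast_pow,
    Real.log_pow]
  push_cast
  ring

section

variable {s : ℂ}

lemma summable_log_mul_vonMangoldt_div_cpow (hs : 1 < s.re) :
    Summable fun n : ℕ => ((Real.log n * Λ n : ℝ) : ℂ) / (n : ℂ) ^ s := by
  have habs : LSeries.abscissaOfAbsConv ↗Λ ≤ 1 :=
    LSeries.abscissaOfAbsConv_le_of_forall_lt_LSeriesSummable fun y hy =>
      LSeriesSummable_vonMangoldt (by simpa using hy)
  refine (LSeriesSummable_logMul_of_lt_re (habs.trans_lt (by exact_mod_cast hs))).congr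
    fun n => ?_
  rcases eq_or_ne n 0 with rfl | hn
  · simp
  · simp [LSeries.term_of_ne_zero hn, LSeries.logMul]

lemma summable_vonMangoldt_sq_div_cpow (hs : 1 < s.re) :
    Summable fun n : ℕ => ((Λ n ^ 2 : ℝ) : ℂ) / (n : ℂ) ^ s := by
  refine .of_norm_bounded (summable_log_mul_vonMangoldt_div_cpow hs).norm fun n => ?_
  rw [norm_div, norm_div, Complex.norm_real, Complex.norm_real]
  gcongr
  calc ‖Λ n ^ 2‖ = Λ n ^ 2 := Real.norm_of_nonneg (sq_nonneg _)
    _ ≤ Real.log n * Λ n := vonMangoldt_sq_le_log_mul_vonMangoldt n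
    _ ≤ ‖Real.log n * Λ n‖ := Real.le_norm_self _

lemma hasSum_log_mul_vonMangoldt_sub_sq_div_cpow_prime_pow (hs : 1 < s.re) (p : Nat.Primes) :
    HasSum (fun k : ℕ => ((Real.log ((p ^ (k + 1) : ℕ) : ℝ) * Λ (p ^ (k + 1)) -
        Λ (p ^ (k + 1)) ^ 2 : ℝ) : ℂ) / ((p ^ (k + 1) : ℕ) : ℂ) ^ s)
      ((Real.log p : ℂ) ^ 2 / ((p : ℂ) ^ s - 1) ^ 2) := by
  have hp := one_lt_norm_natCast_cpow p.prop.one_lt (s := s) (by linarith)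
  convert! (hasSum_natCast_div_pow_succ hp).mul_left ((Real.log p : ℂ) ^ 2) using 1
  · ext k
    rw [log_mul_vonMangoldt_sub_sq_prime_pow, natCast_pow_cpow]
    push_cast
    ring
  · ring

end

/-- For `Re s > 1`, the Dirichlet series `∑ Λ(n)²/n^s` converges and equals
`∑_n (log n)·Λ(n)/n^s − ∑_p (log p)²/(p^s − 1)²`, i.e. `(ζ'/ζ)'(s) − B(s)`. -/
theorem vonMangoldt_sq_dirichlet_series (s : ℂ) (hs : 1 < s.re) :
    HasSum (fun n : ℕ => ((Λ n : ℝ) ^ 2 : ℝ) / (n : ℂ) ^ s)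
      ((∑' n : ℕ, ((Real.log n * Λ n : ℝ) : ℂ) / (n : ℂ) ^ s) -
        ∑' p : Nat.Primes, ((Real.log p : ℝ) : ℂ) ^ 2 / ((p : ℂ) ^ s - 1) ^ 2) := by
  set g : ℕ → ℂ := fun n => ((Real.log n * Λ n - Λ n ^ 2 : ℝ) : ℂ) / (n : ℂ) ^ s with hg_def
  have hg : Summable g := by
    refine ((summable_log_mul_vonMangoldt_div_cpow hs).sub
      (summable_vonMangoldt_sq_div_cpow hs)).congr fun n => ?_
    simp only [hg_def, Complex.ofReal_sub, sub_div]
  have hg_supp : Function.support g ⊆ {n | IsPrimePow n} := fun n hn => by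
    by_contra h
    simp [hg_def, vonMangoldt_eq_zero_iff.mpr h] at hn
  have hg_sum :
      ∑' n, g n = ∑' p : Nat.Primes, ((Real.log p : ℝ) : ℂ) ^ 2 / ((p : ℂ) ^ s - 1) ^ 2 := by
    rw [tsum_eq_tsum_primes_of_support_subset_prime_powers hg hg_supp]
    exact tsum_congr fun p => (hasSum_log_mul_vonMangoldt_sub_sq_div_cpow_prime_pow hs p).tsum_eq
  rw [← hg_sum]
  convert! (summable_log_mul_vonMangoldt_div_cpow hs).hasSum.sub hg.hasSum using 1
  ext n
  simp only [hg_def, Complex.ofReal_sub, sub_div, sub_sub_cancel]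
end

section
/- For all complex s with Re(s) > 1, ∑_{n=1}^∞ Λ(n)²/n^s = ∑_{k=1}^∞ c_k · (ζ'/ζ)'(ks), where c_k = ∑_{d|k} μ(d)·d, and the series over k converges absolutely. -/
/-!
Since `(ζ'/ζ)'(w) = ∑ Λ(n) log n / n^w`, the function `s ↦ (ζ'/ζ)'(k s)` is the Dirichlet
series supported on `k`-th powers with coefficient `Λ(m) log m / k` at `m`. Summing against
`c_k`, the coefficient at `m = p^j` becomes `(log p)² ∑_{k ∣ j} c_k (j / k)`, and this divisor
sum is `1`: `c = (μ · id) * 1` and `μ · id` is the Dirichlet inverse of the completely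
multiplicative `id`. The interchange of the two sums is justified by `|c_k| ≤ σ(k) ≤ k²`
together with the bound `O(2^{-k Re s})` for the `k`-th series.
-/

open ArithmeticFunction
open scoped ArithmeticFunction.Moebius

open LSeries Complex
open scoped ArithmeticFunction.zeta LSeries.notation

theorem tsum_add_one_eq_sum_of_support_subset {M : Type*} [AddCommMonoid M] [TopologicalSpace M]
    {g : ℕ → M} {s : Finset ℕ} (h0 : 0 ∉ s) (hg : ∀ d ∉ s, g d = 0) :
    ∑' k, g (k + 1) = ∑ d ∈ s, g d := by
  rw [Nat.succ_injective.tsum_eq, tsum_eq_sum hg]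
  intro d hd
  obtain ⟨k, rfl⟩ :=
    Nat.exists_eq_add_one_of_ne_zero (n := d) (by rintro rfl; exact hd (hg 0 h0))
  exact ⟨k, rfl⟩

theorem Nat.Prime.pow_mem_range_pow_iff {p j d : ℕ} (hp : p.Prime) (hd : d ≠ 0) :
    p ^ j ∈ Set.range (· ^ d) ↔ d ∣ j := by
  constructor
  · rintro ⟨n, hn : n ^ d = p ^ j⟩
    obtain ⟨i, -, rfl⟩ := (Nat.dvd_prime_pow hp).mp (hn ▸ dvd_pow_self n hd)
    rw [← pow_mul] at hn
    exact Dvd.intro_left i (Nat.pow_right_injective hp.two_le hn)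
  · rintro ⟨e, rfl⟩
    exact ⟨p ^ e, show (p ^ e) ^ d = _ by rw [← pow_mul, mul_comm]⟩

local notation "ι" => ((ArithmeticFunction.id : ArithmeticFunction ℕ) : ArithmeticFunction ℤ)

theorem ArithmeticFunction.natCoe_id_mul_moebius_pmul_natCoe_id :
    ι * (μ : ArithmeticFunction ℤ).pmul ι = 1 := by
  ext n
  have hμ : ∑ d ∈ n.divisors, μ d = if n = 1 then 1 else 0 := by
    rw [← coe_mul_zeta_apply, moebius_mul_coe_zeta, one_apply]
  calc ∑ x ∈ n.divisorsAntidiagonal, (x.1 : ℤ) * (μ x.2 * x.2)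
      = ∑ x ∈ n.divisorsAntidiagonal, (n : ℤ) * μ x.2 := by
        refine Finset.sum_congr rfl fun x hx => ?_
        rw [← (Nat.mem_divisorsAntidiagonal.mp hx).1]
        push_cast
        ring
    _ = (1 : ArithmeticFunction ℤ) n := by
        rw [← Finset.mul_sum, Nat.sum_divisorsAntidiagonal' (fun _ b => μ b), hμ, one_apply]
        split_ifs with h <;> simp [h]

theorem sum_divisors_sum_moebius_mul_self_mul_div {j : ℕ} (hj : j ≠ 0) :
    ∑ d ∈ j.divisors, (∑ e ∈ d.divisors, μ e * (e : ℤ)) * (j / d : ℕ) = 1 := by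
  have h : ((μ : ArithmeticFunction ℤ).pmul ι * ζ * ι) j = 1 := by
    rw [mul_comm, ← mul_assoc, natCoe_id_mul_moebius_pmul_natCoe_id, one_mul, natCoe_apply,
      zeta_apply_ne hj, Nat.cast_one]
  rw [mul_apply, Nat.sum_divisorsAntidiagonal
    (fun a b => ((μ : ArithmeticFunction ℤ).pmul ι * ζ) a * ι b)] at h
  simpa only [coe_mul_zeta_apply, pmul_apply, natCoe_apply, id_apply] using h

theorem abs_sum_divisors_moebius_mul_self_le (k : ℕ) :
    |∑ d ∈ k.divisors, μ d * (d : ℤ)| ≤ (k : ℤ) ^ 2 := by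
  calc |∑ d ∈ k.divisors, μ d * (d : ℤ)| ≤ ∑ d ∈ k.divisors, |μ d * (d : ℤ)| :=
        Finset.abs_sum_le_sum_abs _ _
    _ ≤ ∑ d ∈ k.divisors, (d : ℤ) := Finset.sum_le_sum fun d _ => by
        rw [abs_mul, Int.abs_natCast]
        exact mul_le_of_le_one_left (Int.natCast_nonneg d) abs_moebius_le_one
    _ ≤ (k : ℤ) ^ 2 := by
        rw [← Nat.cast_sum, ← Nat.cast_pow, Nat.cast_le, ← sigma_one_apply]
        exact sigma_le_pow_succ 1 k

namespace LSeries

theorem term_pow (f : ℕ → ℂ) {k : ℕ} (hk : k ≠ 0) (s : ℂ) (n : ℕ) :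
    term f s (n ^ k) = term (fun n => f (n ^ k)) (k * s) n := by
  rcases eq_or_ne n 0 with rfl | hn
  · simp [zero_pow hk]
  · rw [term_of_ne_zero (pow_ne_zero k hn), term_of_ne_zero hn, Nat.cast_pow,
      natCast_cpow_natCast_mul]

theorem support_term_subset (f : ℕ → ℂ) (s : ℂ) :
    Function.support (term f s) ⊆ Function.support f :=
  fun m hm hf => hm (by simp [term_def, hf])

variable {f : ℕ → ℂ} {k : ℕ}

theorem summable_term_iff_of_support_subset_range_pow (hk : k ≠ 0)
    (hf : Function.support f ⊆ Set.range (· ^ k)) (s : ℂ) :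
    LSeriesSummable f s ↔ LSeriesSummable (fun n => f (n ^ k)) (k * s) := by
  rw [LSeriesSummable, LSeriesSummable, ← (Nat.pow_left_injective hk).summable_iff
    fun m hm => Function.notMem_support.mp fun h => hm (hf (support_term_subset f s h))]
  exact summable_congr fun n => term_pow f hk s n

theorem LSeries_eq_of_support_subset_range_pow (hk : k ≠ 0)
    (hf : Function.support f ⊆ Set.range (· ^ k)) (s : ℂ) :
    LSeries f s = LSeries (fun n => f (n ^ k)) (k * s) := by
  rw [LSeries, ← (Nat.pow_left_injective hk).tsum_eq ((support_term_subset f s).trans hf)]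
  exact tsum_congr fun n => term_pow f hk s n

theorem tsum_norm_term_eq_of_support_subset_range_pow (hk : k ≠ 0)
    (hf : Function.support f ⊆ Set.range (· ^ k)) (s : ℂ) :
    ∑' m, ‖term f s m‖ = ∑' n, ‖term (fun n => f (n ^ k)) (k * s) n‖ := by
  rw [← (Nat.pow_left_injective hk).tsum_eq (f := fun m => ‖term f s m‖)]
  · exact tsum_congr fun n => by rw [term_pow f hk s n]
  · exact (Function.support_comp_subset norm_zero _).trans
      ((support_term_subset f s).trans hf)

theorem norm_term_add_le (hf : f 1 = 0) (s : ℂ) {t : ℂ} (ht : 0 ≤ t.re) (n : ℕ) :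
    ‖term f (s + t) n‖ ≤ 2 ^ (-t.re) * ‖term f s n‖ := by
  rcases lt_or_ge n 2 with hn | hn
  · interval_cases n <;> simp [hf]
  have hn0 : (0 : ℝ) < n := by positivity
  have h2n : (2 : ℝ) ^ t.re ≤ (n : ℝ) ^ t.re :=
    Real.rpow_le_rpow zero_le_two (by exact_mod_cast hn) ht
  rw [norm_term_eq, norm_term_eq, if_neg (by omega), if_neg (by omega), add_re,
    Real.rpow_add hn0, Real.rpow_neg zero_le_two]
  calc ‖f n‖ / ((n : ℝ) ^ s.re * (n : ℝ) ^ t.re)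
        = ((n : ℝ) ^ t.re)⁻¹ * (‖f n‖ / (n : ℝ) ^ s.re) := by ring
    _ ≤ ((2 : ℝ) ^ t.re)⁻¹ * (‖f n‖ / (n : ℝ) ^ s.re) := by gcongr

theorem tsum_norm_term_natCast_add_one_mul_le (hf : f 1 = 0) {s : ℂ} (hs : LSeriesSummable f s)
    (hs₀ : 0 ≤ s.re) (k : ℕ) :
    ∑' n, ‖term f ((k + 1 : ℕ) * s) n‖ ≤ (2 ^ (-s.re)) ^ k * ∑' n, ‖term f s n‖ := by
  have hbound (n : ℕ) : ‖term f ((k + 1 : ℕ) * s) n‖ ≤ (2 ^ (-s.re)) ^ k * ‖term f s n‖ := by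
    have hre : 0 ≤ ((k : ℂ) * s).re := by simpa using mul_nonneg k.cast_nonneg hs₀
    have hexp : (2 : ℝ) ^ (-((k : ℂ) * s).re) = (2 ^ (-s.re)) ^ k := by
      rw [← Real.rpow_mul_natCast zero_le_two]
      simp [mul_comm]
    rw [show ((k + 1 : ℕ) : ℂ) * s = s + k * s by push_cast; ring, ← hexp]
    exact norm_term_add_le hf s hre n
  have hsn : Summable fun n => ‖term f s n‖ := hs.norm
  rw [← tsum_mul_left]
  exact ((hsn.mul_left _).of_nonneg_of_le (fun _ => norm_nonneg _) hbound).tsum_le_tsum hbound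
    (hsn.mul_left _)

end LSeries

theorem abscissaOfAbsConv_vonMangoldt_le_one : abscissaOfAbsConv ↗Λ ≤ 1 :=
  abscissaOfAbsConv_le_of_forall_lt_LSeriesSummable fun _ hy =>
    LSeriesSummable_vonMangoldt (by simpa using hy)

theorem LSeriesSummable_logMul_vonMangoldt {s : ℂ} (hs : 1 < s.re) :
    LSeriesSummable (logMul ↗Λ) s :=
  LSeriesSummable_logMul_of_lt_re
    (abscissaOfAbsConv_vonMangoldt_le_one.trans_lt (by exact_mod_cast hs))

theorem deriv_logDeriv_riemannZeta_eq_LSeries_logMul {w : ℂ} (hw : 1 < w.re) :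
    deriv (fun z => deriv riemannZeta z / riemannZeta z) w = LSeries (logMul ↗Λ) w := by
  have h : (fun z => deriv riemannZeta z / riemannZeta z) =ᶠ[nhds w]
      fun z => -LSeries ↗Λ z := by
    filter_upwards [(isOpen_lt continuous_const continuous_re).mem_nhds hw] with z hz
    rw [LSeries_vonMangoldt_eq_deriv_riemannZeta_div hz, neg_div, neg_neg]
  rw [h.deriv_eq, deriv.fun_neg, LSeries_deriv, neg_neg]
  exact abscissaOfAbsConv_vonMangoldt_le_one.trans_lt (by exact_mod_cast hw)

/-- The coefficients of `L(logMul Λ, k s)` as a Dirichlet series in `s`. -/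
noncomputable def vonMangoldtLogOnPowers (k : ℕ) : ℕ → ℂ :=
  (Set.range (· ^ k)).indicator fun m => ((Λ m * Real.log m / k : ℝ) : ℂ)

theorem support_vonMangoldtLogOnPowers_subset (k : ℕ) :
    Function.support (vonMangoldtLogOnPowers k) ⊆ Set.range (· ^ k) :=
  Set.support_indicator_subset

theorem vonMangoldtLogOnPowers_pow {k : ℕ} (hk : k ≠ 0) (n : ℕ) :
    vonMangoldtLogOnPowers k (n ^ k) = logMul ↗Λ n := by
  have hkR : (k : ℝ) ≠ 0 := Nat.cast_ne_zero.mpr hk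
  rw [vonMangoldtLogOnPowers, Set.indicator_of_mem (Set.mem_range_self n),
    vonMangoldt_apply_pow hk, Nat.cast_pow, Real.log_pow, logMul, ← natCast_log, ← ofReal_mul]
  congr 1
  field_simp

theorem LSeries_vonMangoldtLogOnPowers {k : ℕ} (hk : k ≠ 0) (s : ℂ) :
    LSeries (vonMangoldtLogOnPowers k) s = LSeries (logMul ↗Λ) (k * s) := by
  rw [LSeries_eq_of_support_subset_range_pow hk (support_vonMangoldtLogOnPowers_subset k)]
  simp only [vonMangoldtLogOnPowers_pow hk]

theorem tsum_norm_term_vonMangoldtLogOnPowers {k : ℕ} (hk : k ≠ 0) (s : ℂ) :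
    ∑' m, ‖term (vonMangoldtLogOnPowers k) s m‖ = ∑' n, ‖term (logMul ↗Λ) (k * s) n‖ := by
  rw [tsum_norm_term_eq_of_support_subset_range_pow hk (support_vonMangoldtLogOnPowers_subset k)]
  simp only [vonMangoldtLogOnPowers_pow hk]

theorem tsum_mul_vonMangoldtLogOnPowers {c : ℕ → ℤ}
    (hc : ∀ k, c k = ∑ d ∈ k.divisors, μ d * (d : ℤ)) (m : ℕ) :
    ∑' k, (c (k + 1) : ℂ) * vonMangoldtLogOnPowers (k + 1) m = ((Λ m ^ 2 : ℝ) : ℂ) := by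
  by_cases hΛ : Λ m = 0
  · have h0 (k : ℕ) : vonMangoldtLogOnPowers k m = 0 :=
      Set.indicator_apply_eq_zero.mpr fun _ => by simp only [hΛ, zero_mul, zero_div, ofReal_zero]
    simp [h0, hΛ]
  obtain ⟨p, j, hp, hj, rfl⟩ := (isPrimePow_nat_iff _).mp (vonMangoldt_ne_zero_iff.mp hΛ)
  have hΛp : Λ (p ^ j) = Real.log p := by
    rw [vonMangoldt_apply_pow hj.ne', vonMangoldt_apply_prime hp]
  have hvanish (d : ℕ) (hd : d ∉ j.divisors) :
      (c d : ℂ) * vonMangoldtLogOnPowers d (p ^ j) = 0 := by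
    rcases eq_or_ne d 0 with rfl | hd0
    · simp [hc]
    refine mul_eq_zero_of_right _ (Set.indicator_of_notMem ?_ _)
    rw [hp.pow_mem_range_pow_iff hd0]
    exact fun hdvd => hd (Nat.mem_divisors.mpr ⟨hdvd, hj.ne'⟩)
  have hterm (d : ℕ) (hd : d ∈ j.divisors) : (c d : ℂ) * vonMangoldtLogOnPowers d (p ^ j) =
      (c d : ℂ) * ((j / d : ℕ) : ℂ) * ((Real.log p ^ 2 : ℝ) : ℂ) := by
    obtain ⟨hdvd, -⟩ := Nat.mem_divisors.mp hd
    have hd0 : d ≠ 0 := (Nat.pos_of_mem_divisors hd).ne'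
    rw [vonMangoldtLogOnPowers, Set.indicator_of_mem ((hp.pow_mem_range_pow_iff hd0).mpr hdvd),
      hΛp, Nat.cast_pow, Real.log_pow, Nat.cast_div hdvd (Nat.cast_ne_zero.mpr hd0)]
    push_cast
    ring
  have hsum : ∑ d ∈ j.divisors, (c d : ℂ) * ((j / d : ℕ) : ℂ) = 1 := by
    have h := sum_divisors_sum_moebius_mul_self_mul_div hj.ne'
    simp only [← hc] at h
    rw [← Int.cast_one, ← h, Int.cast_sum]
    simp only [Int.cast_mul, Int.cast_natCast]
  rw [tsum_add_one_eq_sum_of_support_subset (by simp) hvanish, Finset.sum_congr rfl hterm,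
    ← Finset.sum_mul, hsum, one_mul, hΛp]

theorem summable_add_one_sq_mul_geometric {r : ℝ} (hr₀ : 0 < r) (hr : r < 1) :
    Summable fun k : ℕ => ((k : ℝ) + 1) ^ 2 * r ^ k := by
  have h := (summable_nat_add_iff (f := fun n : ℕ => (n : ℝ) ^ 2 * r ^ n) 1).mpr
    (summable_pow_mul_geometric_of_norm_lt_one 2 (by rwa [Real.norm_of_nonneg hr₀.le]))
  refine (h.div_const r).congr fun k => ?_
  simp only [pow_succ, Nat.cast_add_one]
  field_simp

theorem one_lt_re_natCast_mul {k : ℕ} (hk : k ≠ 0) {s : ℂ} (hs : 1 < s.re) :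
    1 < ((k : ℂ) * s).re := by
  have hk1 : (1 : ℝ) ≤ k := by exact_mod_cast Nat.one_le_iff_ne_zero.mpr hk
  simpa using one_lt_mul_of_le_of_lt hk1 hs

theorem LSeriesSummable_vonMangoldtLogOnPowers {k : ℕ} (hk : k ≠ 0) {s : ℂ} (hs : 1 < s.re) :
    LSeriesSummable (vonMangoldtLogOnPowers k) s := by
  rw [summable_term_iff_of_support_subset_range_pow hk (support_vonMangoldtLogOnPowers_subset k)]
  simpa only [vonMangoldtLogOnPowers_pow hk] using
    LSeriesSummable_logMul_vonMangoldt (one_lt_re_natCast_mul hk hs)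

theorem tsum_mul_term_vonMangoldtLogOnPowers {c : ℕ → ℤ}
    (hc : ∀ k, c k = ∑ d ∈ k.divisors, μ d * (d : ℤ)) (s : ℂ) (m : ℕ) :
    ∑' k, (c (k + 1) : ℂ) * term (vonMangoldtLogOnPowers (k + 1)) s m =
      ((Λ m ^ 2 : ℝ) : ℂ) / (m : ℂ) ^ s := by
  rcases eq_or_ne m 0 with rfl | hm
  · simp
  simp only [term_of_ne_zero hm, ← mul_div_assoc, tsum_div_const,
    tsum_mul_vonMangoldtLogOnPowers hc]

theorem summable_norm_mul_term_vonMangoldtLogOnPowers {c : ℕ → ℤ}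
    (hc : ∀ k, c k = ∑ d ∈ k.divisors, μ d * (d : ℤ)) {s : ℂ} (hs : 1 < s.re) :
    Summable fun p : ℕ × ℕ =>
      ‖(c (p.1 + 1) : ℂ) * term (vonMangoldtLogOnPowers (p.1 + 1)) s p.2‖ := by
  set C := ∑' n, ‖term (logMul ↗Λ) s n‖
  have hrow (k : ℕ) :
      ∑' m, ‖(c (k + 1) : ℂ) * term (vonMangoldtLogOnPowers (k + 1)) s m‖ ≤
        ((k : ℝ) + 1) ^ 2 * ((2 ^ (-s.re)) ^ k * C) := by
    simp only [norm_mul, tsum_mul_left]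
    rw [tsum_norm_term_vonMangoldtLogOnPowers k.succ_ne_zero]
    gcongr
    · rw [norm_intCast, ← Int.cast_abs]
      exact_mod_cast hc (k + 1) ▸ abs_sum_divisors_moebius_mul_self_le (k + 1)
    · exact tsum_norm_term_natCast_add_one_mul_le (by simp)
        (LSeriesSummable_logMul_vonMangoldt hs) (by linarith) k
  have hgeom := (summable_add_one_sq_mul_geometric (Real.rpow_pos_of_pos two_pos (-s.re))
    (Real.rpow_lt_one_of_one_lt_of_neg one_lt_two (by linarith))).mul_right C
  refine (summable_prod_of_nonneg fun _ => norm_nonneg _).mpr ⟨fun k => ?_, ?_⟩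
  · simpa only [norm_mul] using
      (LSeriesSummable_vonMangoldtLogOnPowers k.succ_ne_zero hs).norm.mul_left _
  · exact hgeom.of_nonneg_of_le (fun _ => tsum_nonneg fun _ => norm_nonneg _)
      fun k => (hrow k).trans_eq (mul_assoc _ _ _).symm

/-- For `Re s > 1`, `∑ Λ(n)²/n^s = ∑_{k≥1} c_k (ζ'/ζ)'(ks)` with
`c_k = ∑_{d|k} μ(d) d`, the series over `k` converging absolutely. -/
theorem vonMangoldt_sq_eq_sum_logDeriv_deriv (s : ℂ) (hs : 1 < s.re)
    (c : ℕ → ℤ) (hc : ∀ k : ℕ, c k = ∑ d ∈ k.divisors, μ d * (d : ℤ)) :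
    Summable (fun k : ℕ =>
      ‖(c (k + 1) : ℂ) *
        deriv (fun w : ℂ => deriv riemannZeta w / riemannZeta w) ((k + 1 : ℕ) * s)‖) ∧
    ∑' n : ℕ, ((Λ n : ℝ) ^ 2 : ℝ) / (n : ℂ) ^ s =
      ∑' k : ℕ, (c (k + 1) : ℂ) *
        deriv (fun w : ℂ => deriv riemannZeta w / riemannZeta w) ((k + 1 : ℕ) * s) := by
  have hderiv (k : ℕ) : (c (k + 1) : ℂ) *
      deriv (fun w : ℂ => deriv riemannZeta w / riemannZeta w) ((k + 1 : ℕ) * s) =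
        ∑' m, (c (k + 1) : ℂ) * term (vonMangoldtLogOnPowers (k + 1)) s m := by
    rw [deriv_logDeriv_riemannZeta_eq_LSeries_logMul (one_lt_re_natCast_mul k.succ_ne_zero hs),
      ← LSeries_vonMangoldtLogOnPowers k.succ_ne_zero, LSeries, tsum_mul_left]
  have hsum := summable_norm_mul_term_vonMangoldtLogOnPowers hc hs
  simp only [hderiv]
  refine ⟨?_, ?_⟩
  · exact ((summable_prod_of_nonneg fun _ => norm_nonneg _).mp hsum).2.of_nonneg_of_le
      (fun _ => norm_nonneg _) fun k => norm_tsum_le_tsum_norm (hsum.prod_factor k)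
  · rw [← Summable.tsum_comm (f := fun k m => (c (k + 1) : ℂ) *
      term (vonMangoldtLogOnPowers (k + 1)) s m) hsum.of_norm]
    exact tsum_congr fun m => (tsum_mul_term_vonMangoldtLogOnPowers hc s m).symm
end

section
/- The Euler product ∏_p (1 − 1/p^{1+s})(1 − 2/p + 1/p^{1+s})/(1 − 1/p)² equals ∏_p (1 − (1 − p^{−s})²/(p−1)²), and it converges for Re(s) ≥ 0; moreover, as s → 0 the product A(s) satisfies A(s) = 1 + O(s²). -/
/-!
On `Re s ≥ 0` one has `‖1 - p^{-s}‖ ≤ 2‖s‖ log p`, so the factor `1 - u_p(s)`,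
`u_p(s) = (1 - p^{-s})² / (p - 1)²`, satisfies `‖u_p(s)‖ ≤ 16 ‖s‖² (log p / p)²`, which is
summable over the primes. Hence the product converges, and
`‖∏ (1 - u_p) - 1‖ ≤ exp (∑ ‖u_p‖) - 1 ≤ exp (C ‖s‖²) - 1 = O(‖s‖²)`.
-/

open Asymptotics Filter Topology

theorem eulerFactor_eq {x : ℂ} (hx₀ : x ≠ 0) (hx₁ : x ≠ 1) (s : ℂ) :
    (1 - x ^ (-(1 + s))) * (1 - 2 / x + x ^ (-(1 + s))) / (1 - 1 / x) ^ 2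
      = 1 - (1 - x ^ (-s)) ^ 2 / (x - 1) ^ 2 := by
  have hx₁' : x - 1 ≠ 0 := sub_ne_zero.mpr hx₁
  rw [neg_add, Complex.cpow_add _ _ hx₀, Complex.cpow_neg_one]
  field_simp
  ring

section OneSub

variable {ι R : Type*} [NormedCommRing R] [NormOneClass R] [CompleteSpace R] {f : ι → R}

theorem multipliable_one_sub_of_summable (hf : Summable fun i ↦ ‖f i‖) :
    Multipliable fun i ↦ 1 - f i := by
  simpa only [← sub_eq_add_neg] using
    multipliable_one_add_of_summable (f := fun i ↦ -f i) (by simpa only [norm_neg] using hf)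

theorem norm_tprod_one_sub_sub_one_le (hf : Summable fun i ↦ ‖f i‖) :
    ‖∏' i, (1 - f i) - 1‖ ≤ Real.exp (∑' i, ‖f i‖) - 1 := by
  refine le_of_tendsto ((multipliable_one_sub_of_summable hf).hasProd.sub_const 1).norm
    (Eventually.of_forall fun t ↦ ?_)
  have ht := t.norm_prod_one_add_sub_one_le fun i ↦ -f i
  simp only [← sub_eq_add_neg, norm_neg] at ht
  grw [ht, hf.sum_le_tsum t fun i _ ↦ norm_nonneg (f i)]

end OneSub

theorem Real.isBigO_exp_sub_one : (fun x ↦ Real.exp x - 1) =O[𝓝 0] fun x ↦ x := by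
  simpa using (Real.hasDerivAt_exp 0).isBigO_sub

theorem Complex.norm_exp_sub_one_le_two_mul_of_re_nonpos {z : ℂ} (hz : z.re ≤ 0) :
    ‖Complex.exp z - 1‖ ≤ 2 * ‖z‖ := by
  rcases le_or_gt ‖z‖ 1 with hz₁ | hz₁
  · exact Complex.norm_exp_sub_one_le hz₁
  · calc ‖Complex.exp z - 1‖ ≤ ‖Complex.exp z‖ + ‖(1 : ℂ)‖ := norm_sub_le _ _
      _ ≤ 1 + 1 := by
        rw [Complex.norm_exp, norm_one]
        gcongr
        exact Real.exp_le_one_iff.mpr hz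
      _ ≤ 2 * ‖z‖ := by linarith

theorem norm_one_sub_natCast_cpow_neg_le {n : ℕ} (hn : n ≠ 0) {s : ℂ} (hs : 0 ≤ s.re) :
    ‖1 - (n : ℂ) ^ (-s)‖ ≤ 2 * ‖s‖ * Real.log n := by
  have hlog : 0 ≤ Real.log n := Real.log_natCast_nonneg n
  have hcpow : (n : ℂ) ^ (-s) = Complex.exp (-(s * Real.log n)) := by
    rw [Complex.cpow_def_of_ne_zero (Nat.cast_ne_zero.mpr hn), Complex.natCast_log]
    ring_nf
  rw [hcpow, norm_sub_rev, mul_assoc]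
  convert Complex.norm_exp_sub_one_le_two_mul_of_re_nonpos _ using 2
  · rw [norm_neg, norm_mul, Complex.norm_real, Real.norm_of_nonneg hlog]
  · simp only [Complex.neg_re, Complex.mul_re, Complex.ofReal_re, Complex.ofReal_im, mul_zero,
      sub_zero, neg_nonpos]
    exact mul_nonneg hs hlog

theorem norm_one_sub_natCast_cpow_neg_sq_div_le {n : ℕ} (hn : 2 ≤ n) {s : ℂ} (hs : 0 ≤ s.re) :
    ‖(1 - (n : ℂ) ^ (-s)) ^ 2 / ((n : ℂ) - 1) ^ 2‖ ≤ 16 * ‖s‖ ^ 2 * (Real.log n / n) ^ 2 := by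
  have hn' : (2 : ℝ) ≤ n := by exact_mod_cast hn
  have hsub : ‖(n : ℂ) - 1‖ = n - 1 := by
    rw [← Complex.ofReal_natCast, ← Complex.ofReal_one, ← Complex.ofReal_sub, Complex.norm_real,
      Real.norm_of_nonneg (by linarith)]
  rw [norm_div, norm_pow, norm_pow, hsub]
  calc ‖1 - (n : ℂ) ^ (-s)‖ ^ 2 / ((n : ℝ) - 1) ^ 2
      ≤ (2 * ‖s‖ * Real.log n) ^ 2 / ((n : ℝ) / 2) ^ 2 := by
        gcongr
        · exact norm_one_sub_natCast_cpow_neg_le (by omega : n ≠ 0) hs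
        · linarith
    _ = 16 * ‖s‖ ^ 2 * (Real.log n / n) ^ 2 := by ring

theorem summable_log_div_sq : Summable fun n : ℕ ↦ (Real.log n / n) ^ 2 := by
  have hlog : (fun x : ℝ ↦ Real.log x ^ 2) =o[atTop] fun x ↦ x ^ (1 / 2 : ℝ) := by
    simpa using isLittleO_log_rpow_rpow_atTop 2 (by norm_num : (0 : ℝ) < 1 / 2)
  have hrpow : (fun x : ℝ ↦ x ^ (1 / 2 : ℝ) * (x ^ 2)⁻¹) =ᶠ[atTop] fun x ↦ x ^ (-(3 / 2) : ℝ) := by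
    filter_upwards [eventually_gt_atTop 0] with x hx
    rw [← Real.rpow_natCast, ← Real.rpow_neg hx.le, ← Real.rpow_add hx]
    norm_num
  have hO : (fun x : ℝ ↦ (Real.log x / x) ^ 2) =O[atTop] fun x ↦ x ^ (-(3 / 2) : ℝ) := by
    simp_rw [div_pow, div_eq_mul_inv]
    exact (hlog.isBigO.mul (isBigO_refl _ _)).trans_eventuallyEq hrpow
  exact summable_of_isBigO_nat (Real.summable_nat_rpow.mpr (by norm_num))
    (hO.comp_tendsto tendsto_natCast_atTop_atTop)

theorem isBigO_exp_mul_norm_sq_sub_one {𝕜 : Type*} [NormedDivisionRing 𝕜] (K : ℝ) :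
    (fun z : 𝕜 ↦ Real.exp (K * ‖z‖ ^ 2) - 1) =O[𝓝 0] fun z ↦ z ^ 2 := by
  have hexp : (fun z : 𝕜 ↦ Real.exp (K * ‖z‖ ^ 2) - 1) =O[𝓝 0] fun z ↦ K * ‖z‖ ^ 2 :=
    Real.isBigO_exp_sub_one.comp_tendsto <| by
      simpa using ((continuous_norm.pow 2).const_mul K).tendsto (0 : 𝕜)
  exact hexp.trans <|
    ((isBigO_refl _ _).norm_left.const_mul_left _).congr_left fun z ↦ by rw [norm_pow]

theorem summable_norm_one_sub_cpow_neg_sq_div_primes {s : ℂ} (hs : 0 ≤ s.re) :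
    Summable fun p : Nat.Primes ↦ ‖(1 - (p : ℂ) ^ (-s)) ^ 2 / ((p : ℂ) - 1) ^ 2‖ :=
  ((summable_log_div_sq.subtype _).mul_left _).of_nonneg_of_le (fun _ ↦ norm_nonneg _)
    fun p ↦ norm_one_sub_natCast_cpow_neg_sq_div_le p.prop.two_le hs

theorem tsum_norm_one_sub_cpow_neg_sq_div_primes_le {s : ℂ} (hs : 0 ≤ s.re) :
    ∑' p : Nat.Primes, ‖(1 - (p : ℂ) ^ (-s)) ^ 2 / ((p : ℂ) - 1) ^ 2‖
      ≤ 16 * (∑' p : Nat.Primes, (Real.log p / p) ^ 2) * ‖s‖ ^ 2 := by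
  calc _ ≤ ∑' p : Nat.Primes, 16 * ‖s‖ ^ 2 * (Real.log p / p) ^ 2 :=
        (summable_norm_one_sub_cpow_neg_sq_div_primes hs).tsum_le_tsum
          (fun p ↦ norm_one_sub_natCast_cpow_neg_sq_div_le p.prop.two_le hs)
          ((summable_log_div_sq.subtype _).mul_left _)
    _ = _ := by rw [tsum_mul_left]; ring

/-- The Euler product `∏_p (1 − p^{-1-s})(1 − 2/p + p^{-1-s})/(1 − 1/p)²` has factors
equal to `1 − (1 − p^{−s})²/(p−1)²`, converges for `Re s ≥ 0`, and the resulting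
function `A` satisfies `A(s) = 1 + O(s²)` as `s → 0` (within `Re s ≥ 0`). -/
theorem eulerProduct_A (A : ℂ → ℂ)
    (hA : ∀ s : ℂ, A s = ∏' p : Nat.Primes, (1 - (1 - (p : ℂ) ^ (-s)) ^ 2 / ((p : ℂ) - 1) ^ 2)) :
    (∀ p : Nat.Primes, ∀ s : ℂ,
      (1 - (p : ℂ) ^ (-(1 + s))) * (1 - 2 / (p : ℂ) + (p : ℂ) ^ (-(1 + s))) / (1 - 1 / (p : ℂ)) ^ 2
        = 1 - (1 - (p : ℂ) ^ (-s)) ^ 2 / ((p : ℂ) - 1) ^ 2) ∧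
    (∀ s : ℂ, 0 ≤ s.re →
      Multipliable (fun p : Nat.Primes => 1 - (1 - (p : ℂ) ^ (-s)) ^ 2 / ((p : ℂ) - 1) ^ 2)) ∧
    (fun s : ℂ => A s - 1) =O[nhdsWithin 0 {s : ℂ | 0 ≤ s.re}] (fun s : ℂ => s ^ 2) := by
  refine ⟨fun p s ↦ eulerFactor_eq (mod_cast p.prop.ne_zero) (mod_cast p.prop.ne_one) s,
    fun s hs ↦ multipliable_one_sub_of_summable (summable_norm_one_sub_cpow_neg_sq_div_primes hs),
    ?_⟩
  set C := ∑' p : Nat.Primes, (Real.log p / p) ^ 2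
  have hC : 0 ≤ C := tsum_nonneg fun _ ↦ sq_nonneg _
  have hA_le : (fun s ↦ A s - 1) =O[𝓝[{s | 0 ≤ s.re}] 0]
      fun s ↦ Real.exp (16 * C * ‖s‖ ^ 2) - 1 := by
    refine IsBigO.of_bound 1 (eventually_nhdsWithin_of_forall fun s (hs : 0 ≤ s.re) ↦ ?_)
    rw [one_mul, Real.norm_of_nonneg (sub_nonneg.mpr (Real.one_le_exp (by positivity))), hA s]
    grw [norm_tprod_one_sub_sub_one_le (summable_norm_one_sub_cpow_neg_sq_div_primes hs),
      tsum_norm_one_sub_cpow_neg_sq_div_primes_le hs]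
  exact hA_le.trans ((isBigO_exp_mul_norm_sq_sub_one _).mono nhdsWithin_le_nhds)
end

section
/- For complex s, the function A(s) = ∏_p (1 − (1−p^{−s})²/(p−1)²) admits the absolutely convergent series representation A(s) = ∑_{n=1}^∞ (μ(n)/φ(n)²) ∑_{d,δ | n} μ(d)μ(δ)(dδ)^{−s} for Re(s) ≥ 0. -/
/-!
The coefficients `a(n) = μ(n)/φ(n)² · (∑_{d∣n} μ(d) d^{-s})²` form a multiplicative function
supported on squarefree numbers, with `a(p) = -(1 - p^{-s})²/(p - 1)²`, so `‖a(p)‖ ≤ 4/(p - 1)²`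
when `Re s ≥ 0`. For such a function every finite partial sum of `‖a(n)‖` is bounded by an Euler
product `∏_{p<N} (1 + ‖a(p)‖) ≤ exp (∑_p ‖a(p)‖)`, which gives absolute convergence; the Euler
product formula then identifies the sum with `∏_p (1 + a(p)) = A(s)`.
-/

open ArithmeticFunction
open scoped ArithmeticFunction.Moebius ArithmeticFunction.zeta

theorem tsum_apply_pow_eq_add {R : Type*} [AddCommMonoid R] [TopologicalSpace R] {g : ℕ → R}
    {p : ℕ} (hg : ∀ k, 2 ≤ k → g (p ^ k) = 0) : ∑' e : ℕ, g (p ^ e) = g 1 + g p := by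
  rw [tsum_eq_sum (s := {0, 1}) fun e he ↦ hg e (by simp at he; omega),
    Finset.sum_pair zero_ne_one, pow_zero, pow_one]

namespace ArithmeticFunction

theorem IsMultiplicative.summable_norm_of_summable_norm_primes {R : Type*} [NormedCommRing R]
    [NormMulClass R] [NormOneClass R] [CompleteSpace R] {f : ArithmeticFunction R}
    (hf : f.IsMultiplicative) (hsq : ∀ p k, p.Prime → 2 ≤ k → f (p ^ k) = 0)
    (hprimes : Summable fun p : Nat.Primes ↦ ‖f p‖) : Summable (‖f ·‖) := by
  set C := ∑' p : Nat.Primes, ‖f p‖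
  refine summable_of_sum_le (c := Real.exp C) (fun n ↦ norm_nonneg _) fun u ↦ ?_
  set N := u.sup id + 1
  have hsmooth := EulerProduct.summable_and_hasSum_smoothNumbers_prod_primesBelow_tsum
    (f := (‖f ·‖)) (by simp [hf.map_one]) (fun h ↦ by simp [hf.map_mul_of_coprime h])
    (fun hp ↦ summable_of_ne_finset_zero (s := {0, 1}) fun e he ↦ by
      simp [hsq _ e hp (by simp at he; omega)]) N
  have hu : ∑ n ∈ u, ‖f n‖ ≤ ∑' m : N.smoothNumbers, ‖f m‖ := by
    rw [tsum_subtype N.smoothNumbers (‖f ·‖)]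
    refine (Finset.sum_le_sum fun n hn ↦ ?_).trans <| Summable.sum_le_tsum u
      (fun n _ ↦ Set.indicator_nonneg (fun _ _ ↦ norm_nonneg _) n)
      (summable_subtype_iff_indicator.mp hsmooth.1.of_norm)
    rcases Nat.eq_zero_or_pos n with rfl | hn0
    · rw [map_zero, norm_zero]
      exact Set.indicator_nonneg (fun _ _ ↦ norm_nonneg _) 0
    · rw [Set.indicator_of_mem (Nat.mem_smoothNumbers_of_lt hn0
        (Nat.lt_succ_of_le (Finset.le_sup (f := id) hn)))]
  have hlocal : ∀ p ∈ N.primesBelow, ∑' e : ℕ, ‖f (p ^ e)‖ = 1 + ‖f p‖ := fun p hp ↦ by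
    rw [tsum_apply_pow_eq_add (g := (‖f ·‖))
      fun k hk ↦ by simp [hsq p k (Nat.prime_of_mem_primesBelow hp) hk], hf.map_one, norm_one]
  have hprimesBelow : ∑ p ∈ N.primesBelow, ‖f p‖ ≤ C :=
    calc ∑ p ∈ N.primesBelow, ‖f p‖ = ∑ p ∈ N.primesBelow.subtype Nat.Prime, ‖f p‖ := by
          rw [Finset.sum_subtype_eq_sum_filter (‖f ·‖),
            Finset.filter_true_of_mem fun p ↦ Nat.prime_of_mem_primesBelow]
      _ ≤ C := Summable.sum_le_tsum (ι := Nat.Primes) _ (fun _ _ ↦ norm_nonneg _) hprimes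
  calc ∑ n ∈ u, ‖f n‖ ≤ ∏ p ∈ N.primesBelow, (1 + ‖f p‖) := by
        rwa [← Finset.prod_congr rfl hlocal, ← hsmooth.2.tsum_eq]
    _ ≤ ∏ p ∈ N.primesBelow, Real.exp ‖f p‖ :=
        Finset.prod_le_prod (fun _ _ ↦ by positivity) fun p _ ↦ by
          rw [add_comm]; exact Real.add_one_le_exp _
    _ = Real.exp (∑ p ∈ N.primesBelow, ‖f p‖) := (Real.exp_sum _ _).symm
    _ ≤ Real.exp C := Real.exp_le_exp.mpr hprimesBelow

-- `(0 : ℂ) ^ (0 : ℂ) = 1`, so the value at `0` has to be set to `0` by hand.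
noncomputable def natCpow (s : ℂ) : ArithmeticFunction ℂ :=
  ⟨fun n ↦ if n = 0 then 0 else (n : ℂ) ^ s, rfl⟩

theorem natCpow_apply (s : ℂ) {n : ℕ} (hn : n ≠ 0) : natCpow s n = (n : ℂ) ^ s := if_neg hn

theorem isMultiplicative_natCpow (s : ℂ) : (natCpow s).IsMultiplicative := by
  refine ⟨by simp [natCpow_apply], fun {m n} _ ↦ ?_⟩
  rcases eq_or_ne m 0 with rfl | hm
  · simp [natCpow]
  rcases eq_or_ne n 0 with rfl | hn
  · simp [natCpow]
  rw [natCpow_apply s (mul_ne_zero hm hn), natCpow_apply s hm, natCpow_apply s hn,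
    Nat.cast_mul, Complex.natCast_mul_natCast_cpow]

end ArithmeticFunction

noncomputable def moebiusCpowSum (s : ℂ) : ArithmeticFunction ℂ :=
  pmul (μ : ArithmeticFunction ℂ) (natCpow (-s)) * (ζ : ArithmeticFunction ℂ)

theorem moebiusCpowSum_apply (s : ℂ) (n : ℕ) :
    moebiusCpowSum s n = ∑ d ∈ n.divisors, (μ d : ℂ) * (d : ℂ) ^ (-s) := by
  rw [moebiusCpowSum, coe_mul_zeta_apply]
  refine Finset.sum_congr rfl fun d hd ↦ ?_
  rw [pmul_apply, intCoe_apply, natCpow_apply _ (Nat.pos_of_mem_divisors hd).ne']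

theorem isMultiplicative_moebiusCpowSum (s : ℂ) : (moebiusCpowSum s).IsMultiplicative :=
  (isMultiplicative_moebius.intCast.pmul (isMultiplicative_natCpow _)).mul
    isMultiplicative_zeta.natCast

theorem moebiusCpowSum_prime (s : ℂ) {p : ℕ} (hp : p.Prime) :
    moebiusCpowSum s p = 1 - (p : ℂ) ^ (-s) := by
  rw [moebiusCpowSum_apply, hp.divisors, Finset.sum_pair hp.one_lt.ne, moebius_apply_one,
    moebius_apply_prime hp]
  simp [sub_eq_add_neg]

theorem sum_divisors_sum_divisors_moebius_mul_cpow (s : ℂ) (n : ℕ) :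
    ∑ d ∈ n.divisors, ∑ δ ∈ n.divisors, (μ d : ℂ) * (μ δ : ℂ) * ((d * δ : ℕ) : ℂ) ^ (-s) =
      moebiusCpowSum s n ^ 2 := by
  rw [moebiusCpowSum_apply, sq, Finset.sum_mul_sum]
  refine Finset.sum_congr rfl fun d _ ↦ Finset.sum_congr rfl fun δ _ ↦ ?_
  rw [Nat.cast_mul, Complex.natCast_mul_natCast_cpow]
  ring

noncomputable def aCoeff (s : ℂ) : ArithmeticFunction ℂ :=
  ⟨fun n ↦ (μ n : ℂ) / (n.totient : ℂ) ^ 2 * moebiusCpowSum s n ^ 2, by simp⟩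

theorem aCoeff_apply (s : ℂ) (n : ℕ) :
    aCoeff s n = (μ n : ℂ) / (n.totient : ℂ) ^ 2 *
      ∑ d ∈ n.divisors, ∑ δ ∈ n.divisors, (μ d : ℂ) * (μ δ : ℂ) * ((d * δ : ℕ) : ℂ) ^ (-s) := by
  rw [sum_divisors_sum_divisors_moebius_mul_cpow]
  rfl

theorem isMultiplicative_aCoeff (s : ℂ) : (aCoeff s).IsMultiplicative := by
  have hT := isMultiplicative_moebiusCpowSum s
  refine ⟨by simp [aCoeff, hT.map_one], fun {m n} h ↦ ?_⟩
  simp only [aCoeff, coe_mk, hT.map_mul_of_coprime h,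
    isMultiplicative_moebius.map_mul_of_coprime h, Nat.totient_mul h]
  push_cast
  ring

theorem aCoeff_prime (s : ℂ) {p : ℕ} (hp : p.Prime) :
    aCoeff s p = -((1 - (p : ℂ) ^ (-s)) ^ 2 / ((p : ℂ) - 1) ^ 2) := by
  simp only [aCoeff, coe_mk, moebiusCpowSum_prime s hp, moebius_apply_prime hp,
    Nat.totient_prime hp, Nat.cast_sub hp.one_le]
  push_cast
  ring

theorem aCoeff_prime_pow (s : ℂ) {p k : ℕ} (hp : p.Prime) (hk : 2 ≤ k) : aCoeff s (p ^ k) = 0 := by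
  simp [aCoeff, moebius_apply_prime_pow hp (by omega : k ≠ 0), show k ≠ 1 by omega]

theorem norm_aCoeff_prime_le (s : ℂ) (hs : 0 ≤ s.re) {p : ℕ} (hp : p.Prime) :
    ‖aCoeff s p‖ ≤ 4 / ((p : ℝ) - 1) ^ 2 := by
  have hcpow : ‖(p : ℂ) ^ (-s)‖ ≤ 1 := by
    rw [Complex.norm_natCast_cpow_of_pos hp.pos]
    exact Real.rpow_le_one_of_one_le_of_nonpos (mod_cast hp.one_le) (by simpa using hs)
  have hnum : ‖1 - (p : ℂ) ^ (-s)‖ ≤ 2 := by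
    linarith [norm_sub_le (1 : ℂ) ((p : ℂ) ^ (-s)), norm_one (α := ℂ)]
  have hden : ‖(p : ℂ) - 1‖ = (p : ℝ) - 1 := by
    rw [← Nat.cast_pred hp.pos, Complex.norm_natCast, Nat.cast_pred hp.pos]
  rw [aCoeff_prime s hp, norm_neg, norm_div, norm_pow, norm_pow, hden]
  have hnum2 : ‖1 - (p : ℂ) ^ (-s)‖ ^ 2 ≤ 2 ^ 2 := pow_le_pow_left₀ (norm_nonneg _) hnum 2
  exact div_le_div_of_nonneg_right (by linarith) (sq_nonneg _)

theorem summable_norm_aCoeff_primes (s : ℂ) (hs : 0 ≤ s.re) :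
    Summable fun p : Nat.Primes ↦ ‖aCoeff s p‖ := by
  have hshift : Summable fun n : ℕ ↦ 4 / ((n : ℝ) - 1) ^ 2 := by
    refine (summable_nat_add_iff 1).mp ?_
    simpa [div_eq_mul_inv] using (Real.summable_one_div_nat_pow.mpr one_lt_two).mul_left 4
  exact (hshift.comp_injective Subtype.val_injective).of_nonneg_of_le (fun _ ↦ norm_nonneg _)
    fun p ↦ norm_aCoeff_prime_le s hs p.prop

/-- For `Re s ≥ 0`, the product `A(s) = ∏_p (1 − (1−p^{−s})²/(p−1)²)` admits the
absolutely convergent series representation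
`A(s) = ∑_n (μ(n)/φ(n)²) ∑_{d,δ|n} μ(d)μ(δ)(dδ)^{−s}`. -/
theorem A_series_representation (s : ℂ) (hs : 0 ≤ s.re) :
    Summable (fun n : ℕ =>
      ‖((μ n : ℂ) / (Nat.totient n : ℂ) ^ 2) *
        ∑ d ∈ n.divisors, ∑ δ ∈ n.divisors,
          (μ d : ℂ) * (μ δ : ℂ) * ((d * δ : ℕ) : ℂ) ^ (-s)‖) ∧
    ∏' p : Nat.Primes, (1 - (1 - (p : ℂ) ^ (-s)) ^ 2 / ((p : ℂ) - 1) ^ 2) =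
      ∑' n : ℕ, ((μ n : ℂ) / (Nat.totient n : ℂ) ^ 2) *
        ∑ d ∈ n.divisors, ∑ δ ∈ n.divisors,
          (μ d : ℂ) * (μ δ : ℂ) * ((d * δ : ℕ) : ℂ) ^ (-s) := by
  have hmul := isMultiplicative_aCoeff s
  have hsum : Summable (‖aCoeff s ·‖) :=
    hmul.summable_norm_of_summable_norm_primes (fun _ _ hp hk ↦ aCoeff_prime_pow s hp hk)
      (summable_norm_aCoeff_primes s hs)
  simp only [← aCoeff_apply]
  refine ⟨hsum, ?_⟩
  rw [← hmul.eulerProduct_tprod hsum]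
  refine tprod_congr fun p ↦ ?_
  rw [tsum_apply_pow_eq_add fun k hk ↦ aCoeff_prime_pow s p.prop hk, hmul.map_one,
    aCoeff_prime s p.prop, sub_eq_add_neg]
end
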